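/- arXiv:1605.00954 — 3 statements merged into one kernel-verified Lean document; each statement's English description precedes it below -/
import Mathlib

section
/- Let n ≥ 2 and let L be a k-dimensional linear subspace of ℝⁿ with 2 ≤ k ≤ n−1. If a homogeneous polynomial p of degree r on ℝⁿ satisfies p(ϑ⁻¹ y) = p(y) for every rotation ϑ ∈ SO(n) that fixes the orthogonal complement L^⊥ pointwise, then p can be written as p(y) = Σ_{j=0}^{⌊r/2⌋} ‖π_L y‖^{2j} q_j(π_{L^⊥} y), where π_L and π_{L^⊥} denote the orthogonal projections onto L and L^⊥, and each q_j is a homogeneous polynomial of degree r−2j on L^⊥. -/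
/-!
Since `dim L ≥ 2`, two reflections fixing `Lᗮ` compose to a rotation carrying any vector of `L`
to any other of the same norm. Hence, for a fixed unit vector `e ∈ L`, an invariant `p` satisfies
`p y = p (‖π_L y‖ • e + π_{Lᗮ} y)`, and `t ↦ p (t • e + w)` is even (rotate `e` to `-e`).
Expanding `p (t • e + w)` in powers of `t`, the coefficient of `t ^ m` is a homogeneous polynomial
of degree `r - m` in `w`, and evenness kills the odd powers; the `q j` are the coefficients
of `t ^ (2 * j)`.
-/

open scoped RealInnerProductSpace
open Finset

/-- The orthogonal projection onto a subspace, as a map into the ambient space. -/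
noncomputable def projVec {n : ℕ} (L : Submodule ℝ (EuclideanSpace ℝ (Fin n)))
    (y : EuclideanSpace ℝ (Fin n)) : EuclideanSpace ℝ (Fin n) :=
  (L.orthogonalProjection y : EuclideanSpace ℝ (Fin n))

/-- A rotation of ℝⁿ: a linear isometry with positive determinant. -/
def IsRotation {n : ℕ} (ϑ : EuclideanSpace ℝ (Fin n) ≃ₗᵢ[ℝ] EuclideanSpace ℝ (Fin n)) : Prop :=
  0 < LinearMap.det (ϑ.toLinearEquiv : EuclideanSpace ℝ (Fin n) →ₗ[ℝ] EuclideanSpace ℝ (Fin n))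

namespace Polynomial

variable {R : Type*}

theorem coeff_eq_zero_of_comp_neg_X_eq [CommRing R] [NoZeroDivisors R] [CharZero R] {P : R[X]}
    (hP : P.comp (-X) = P) {m : ℕ} (hm : Odd m) : P.coeff m = 0 := by
  have h := congr_arg (coeff · m) hP
  simp only [← neg_one_mul (X : R[X]), ← C_1, ← C_neg, comp_C_mul_X_coeff, hm.neg_one_pow,
    mul_neg_one] at h
  exact CharZero.neg_eq_self_iff.mp h

theorem eval_eq_sum_range_even [CommSemiring R] {P : R[X]} {d : ℕ} (hd : P.natDegree ≤ d)
    (hodd : ∀ m, Odd m → P.coeff m = 0) (t : R) :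
    P.eval t = ∑ j ∈ range (d / 2 + 1), P.coeff (2 * j) * t ^ (2 * j) := by
  have hsub : (range (d / 2 + 1)).image (2 * ·) ⊆ range (d + 1) := by
    intro m hm
    simp only [mem_image, mem_range] at hm ⊢
    omega
  rw [eval_eq_sum_range' (Nat.lt_succ_of_le hd), ← sum_subset hsub, sum_image (by simp)]
  intro m hmd hm
  rw [hodd m (Nat.not_even_iff_odd.mp ?_), zero_mul]
  rintro ⟨c, rfl⟩
  simp only [mem_image, mem_range] at hm hmd
  exact hm ⟨c, by omega, by omega⟩

end Polynomial

namespace MvPolynomial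

variable {R : Type*} [CommRing R] {n : ℕ}

/-- The expansion of `p (x + t • e)` in powers of `t`, with coefficients polynomials in `x`;
the variable `0` of `Fin (n + 1)` plays the role of `t` before `finSuccEquiv` splits it off. -/
noncomputable def lineExpansion (e : Fin n → R) (p : MvPolynomial (Fin n) R) :
    Polynomial (MvPolynomial (Fin n) R) :=
  finSuccEquiv R n (aeval (fun i => X i.succ + C (e i) * X 0) p)

theorem eval_map_eval_lineExpansion (e w : Fin n → R) (p : MvPolynomial (Fin n) R) (t : R) :
    ((lineExpansion e p).map (eval w)).eval t = eval (t • e + w) p := by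
  rw [lineExpansion, ← eval_eq_eval_mv_eval', aeval_eq_bind₁, eval, eval₂Hom_bind₁]
  congr 2
  funext i
  simp [mul_comm, add_comm]

namespace IsHomogeneous

variable {p : MvPolynomial (Fin n) R} {r : ℕ}

theorem aeval_X_succ_add_C_mul_X_zero (hp : p.IsHomogeneous r) (e : Fin n → R) :
    (MvPolynomial.aeval (fun i => X i.succ + C (e i) * X 0) p :
      MvPolynomial (Fin (n + 1)) R).IsHomogeneous r := by
  simpa using hp.aeval _ fun i => (isHomogeneous_X R i.succ).add (isHomogeneous_C_mul_X (e i) 0)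

theorem natDegree_lineExpansion_le (hp : p.IsHomogeneous r) (e : Fin n → R) :
    (lineExpansion e p).natDegree ≤ r := by
  rw [lineExpansion, natDegree_finSuccEquiv]
  exact (degreeOf_le_totalDegree _ 0).trans (hp.aeval_X_succ_add_C_mul_X_zero e).totalDegree_le

theorem lineExpansion_coeff_isHomogeneous (hp : p.IsHomogeneous r) (e : Fin n → R) {m : ℕ}
    (hm : m ≤ r) : ((lineExpansion e p).coeff m).IsHomogeneous (r - m) :=
  (hp.aeval_X_succ_add_C_mul_X_zero e).finSuccEquiv_coeff_isHomogeneous m (r - m) (by omega)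

theorem eval_smul_add_eq_sum_range_of_even [IsDomain R] [CharZero R] (hp : p.IsHomogeneous r)
    (e w : Fin n → R) (heven : ∀ t : R, eval ((-t) • e + w) p = eval (t • e + w) p) (t : R) :
    eval (t • e + w) p =
      ∑ j ∈ range (r / 2 + 1), t ^ (2 * j) * eval w ((lineExpansion e p).coeff (2 * j)) := by
  set P := (lineExpansion e p).map (eval w)
  have hP : ∀ t, P.eval t = eval (t • e + w) p := eval_map_eval_lineExpansion e w p
  have hP_even : P.comp (-Polynomial.X) = P := Polynomial.funext fun s => by
    simp only [Polynomial.eval_comp, Polynomial.eval_neg, Polynomial.eval_X, hP, heven]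
  rw [← hP, Polynomial.eval_eq_sum_range_even
    (Polynomial.natDegree_map_le.trans (hp.natDegree_lineExpansion_le e))
    (fun m hm => Polynomial.coeff_eq_zero_of_comp_neg_X_eq hP_even hm)]
  exact sum_congr rfl fun j _ => by rw [Polynomial.coeff_map, mul_comm]

end IsHomogeneous

end MvPolynomial

theorem Submodule.exists_mem_ne_zero_inner_eq_zero {E : Type*} [NormedAddCommGroup E]
    [InnerProductSpace ℝ E] (L : Submodule ℝ E) [FiniteDimensional ℝ L]
    (hL : 2 ≤ Module.finrank ℝ L) (v : E) : ∃ z ∈ L, z ≠ 0 ∧ ⟪v, z⟫ = 0 := by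
  let f : L →ₗ[ℝ] ℝ := (innerₛₗ ℝ v).comp L.subtype
  have hker : LinearMap.ker f ≠ ⊥ :=
    LinearMap.ker_ne_bot_of_finrank_lt (by rw [Module.finrank_self]; omega)
  obtain ⟨z, hz, hz0⟩ := Submodule.exists_mem_ne_zero_of_ne_bot hker
  exact ⟨z, z.2, by simpa using hz0, by simpa [f] using hz⟩

section Rotation

variable {n : ℕ}

theorem isRotation_refl : IsRotation (LinearIsometryEquiv.refl ℝ (EuclideanSpace ℝ (Fin n))) := by
  simp [IsRotation]

theorem isRotation_reflection_trans_reflection {a b : EuclideanSpace ℝ (Fin n)} (ha : a ≠ 0)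
    (hb : b ≠ 0) : IsRotation ((ℝ ∙ a)ᗮ.reflection.trans (ℝ ∙ b)ᗮ.reflection) := by
  have hdet : ∀ c : EuclideanSpace ℝ (Fin n), c ≠ 0 →
      LinearMap.det (ℝ ∙ c)ᗮ.reflection.toLinearMap = -1 := fun c hc => by
    rw [Submodule.det_reflection, Submodule.orthogonal_orthogonal, finrank_span_singleton hc,
      pow_one]
  change 0 < LinearMap.det ((ℝ ∙ b)ᗮ.reflection.toLinearMap ∘ₗ (ℝ ∙ a)ᗮ.reflection.toLinearMap)
  rw [LinearMap.det_comp, hdet a ha, hdet b hb]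
  norm_num

variable {L : Submodule ℝ (EuclideanSpace ℝ (Fin n))}

/-- Reflect `u` to `v` across `(u - v)ᗮ`, then restore the orientation by reflecting across `zᗮ`
for some `z ∈ L` orthogonal to `v`; both reflections fix `Lᗮ`. -/
theorem exists_isRotation_fixing_orthogonal_apply_eq (hL : 2 ≤ Module.finrank ℝ L)
    {u v : EuclideanSpace ℝ (Fin n)} (hu : u ∈ L) (hv : v ∈ L) (huv : ‖u‖ = ‖v‖) :
    ∃ ϑ : EuclideanSpace ℝ (Fin n) ≃ₗᵢ[ℝ] EuclideanSpace ℝ (Fin n),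
      IsRotation ϑ ∧ (∀ w ∈ Lᗮ, ϑ w = w) ∧ ϑ u = v := by
  rcases eq_or_ne u v with rfl | hne
  · exact ⟨LinearIsometryEquiv.refl ℝ _, isRotation_refl, fun _ _ => rfl, rfl⟩
  obtain ⟨z, hzL, hz0, hvz⟩ := L.exists_mem_ne_zero_inner_eq_zero hL v
  have fixes : ∀ {c x : EuclideanSpace ℝ (Fin n)}, ⟪c, x⟫ = 0 → (ℝ ∙ c)ᗮ.reflection x = x :=
    fun h => Submodule.reflection_mem_subspace_eq_self
      (Submodule.mem_orthogonal_singleton_iff_inner_right.mpr h)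
  refine ⟨(ℝ ∙ (u - v))ᗮ.reflection.trans (ℝ ∙ z)ᗮ.reflection,
    isRotation_reflection_trans_reflection (sub_ne_zero.mpr hne) hz0, fun w hw => ?_, ?_⟩
  · simp only [LinearIsometryEquiv.trans_apply]
    rw [fixes (Submodule.inner_right_of_mem_orthogonal (L.sub_mem hu hv) hw),
      fixes (Submodule.inner_right_of_mem_orthogonal hzL hw)]
  · simp only [LinearIsometryEquiv.trans_apply]
    rw [Submodule.reflection_sub huv, fixes (real_inner_comm v z ▸ hvz)]

theorem apply_add_eq_of_rotation_invariant {β : Type*} (hL : 2 ≤ Module.finrank ℝ L)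
    {f : EuclideanSpace ℝ (Fin n) → β}
    (hf : ∀ ϑ : EuclideanSpace ℝ (Fin n) ≃ₗᵢ[ℝ] EuclideanSpace ℝ (Fin n),
      IsRotation ϑ → (∀ w ∈ Lᗮ, ϑ w = w) → ∀ y, f (ϑ.symm y) = f y)
    ⦃u v w : EuclideanSpace ℝ (Fin n)⦄ (hu : u ∈ L) (hv : v ∈ L) (huv : ‖u‖ = ‖v‖)
    (hw : w ∈ Lᗮ) : f (u + w) = f (v + w) := by
  obtain ⟨ϑ, hrot, hfix, hϑu⟩ := exists_isRotation_fixing_orthogonal_apply_eq hL hu hv huv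
  have hϑ : ϑ (u + w) = v + w := by rw [map_add, hϑu, hfix w hw]
  rw [← hf ϑ hrot hfix (v + w), ← hϑ, LinearIsometryEquiv.symm_apply_apply]

end Rotation

theorem stmt_0_general (n k r : ℕ) (hk2 : 2 ≤ k)
    (L : Submodule ℝ (EuclideanSpace ℝ (Fin n))) (hL : Module.finrank ℝ L = k)
    (p : MvPolynomial (Fin n) ℝ) (hp : p.IsHomogeneous r)
    (hinv : ∀ ϑ : EuclideanSpace ℝ (Fin n) ≃ₗᵢ[ℝ] EuclideanSpace ℝ (Fin n),
      IsRotation ϑ → (∀ w ∈ Lᗮ, ϑ w = w) →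
      ∀ y : EuclideanSpace ℝ (Fin n),
        MvPolynomial.eval (fun i => (ϑ.symm y) i) p = MvPolynomial.eval (fun i => y i) p) :
    ∃ q : ℕ → MvPolynomial (Fin n) ℝ,
      (∀ j ≤ r / 2, (q j).IsHomogeneous (r - 2 * j)) ∧
      ∀ y : EuclideanSpace ℝ (Fin n),
        MvPolynomial.eval (fun i => y i) p =
          ∑ j ∈ Finset.range (r / 2 + 1),
            ‖projVec L y‖ ^ (2 * j) *
              MvPolynomial.eval (fun i => (projVec Lᗮ y) i) (q j) := by
  have hL2 : 2 ≤ Module.finrank ℝ L := hL ▸ hk2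
  have hradial := apply_add_eq_of_rotation_invariant hL2
    (f := fun x => MvPolynomial.eval (fun i => x i) p) hinv
  have : Nontrivial L := Module.nontrivial_of_finrank_pos (by omega : 0 < Module.finrank ℝ L)
  obtain ⟨⟨e, heL⟩, he⟩ := exists_norm_eq L zero_le_one
  replace he : ‖e‖ = 1 := he
  refine ⟨fun j => (MvPolynomial.lineExpansion (fun i => e i) p).coeff (2 * j),
    fun j hj => hp.lineExpansion_coeff_isHomogeneous _ (by omega), fun y => ?_⟩
  set u := projVec L y
  set w := projVec Lᗮ y
  have hu : u ∈ L := SetLike.coe_mem _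
  have hw : w ∈ Lᗮ := SetLike.coe_mem _
  have hy : u + w = y := L.starProjection_add_starProjection_orthogonal y
  calc MvPolynomial.eval (fun i => y i) p
      = MvPolynomial.eval (fun i => (‖u‖ • e + w) i) p := by
        rw [← hy]
        exact hradial hu (L.smul_mem _ heL) (by simp [norm_smul, he]) hw
    _ = _ := hp.eval_smul_add_eq_sum_range_of_even (fun i => e i) (fun i => w i)
        (fun t => hradial (L.smul_mem _ heL) (L.smul_mem _ heL) (by simp [norm_smul]) hw) _

theorem stmt_0 (n k r : ℕ) (hn : 2 ≤ n) (hk2 : 2 ≤ k) (hkn : k ≤ n - 1)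
    (L : Submodule ℝ (EuclideanSpace ℝ (Fin n))) (hL : Module.finrank ℝ L = k)
    (p : MvPolynomial (Fin n) ℝ) (hp : p.IsHomogeneous r)
    (hinv : ∀ ϑ : EuclideanSpace ℝ (Fin n) ≃ₗᵢ[ℝ] EuclideanSpace ℝ (Fin n),
      IsRotation ϑ → (∀ w ∈ Lᗮ, ϑ w = w) →
      ∀ y : EuclideanSpace ℝ (Fin n),
        MvPolynomial.eval (fun i => (ϑ.symm y) i) p = MvPolynomial.eval (fun i => y i) p) :
    ∃ q : ℕ → MvPolynomial (Fin n) ℝ,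
      (∀ j ≤ r / 2, (q j).IsHomogeneous (r - 2 * j)) ∧
      ∀ y : EuclideanSpace ℝ (Fin n),
        MvPolynomial.eval (fun i => y i) p =
          ∑ j ∈ Finset.range (r / 2 + 1),
            ‖projVec L y‖ ^ (2 * j) *
              MvPolynomial.eval (fun i => (projVec Lᗮ y) i) (q j) :=
  stmt_0_general n k r hk2 L hL p hp hinv
end

section
/- Let p, r ∈ ℕ with r ≤ p. If real constants c_m (for 0 ≤ m ≤ ⌊(p−r)/2⌋) and d_m (for 0 ≤ m ≤ ⌊(p−r−1)/2⌋) satisfy Σ_m c_m (x₁²+x₂²)^m x₁^{p−r−2m} + Σ_m d_m (x₁²+x₂²)^m x₂ x₁^{p−r−2m−1} = 0 for all (x₁,x₂) ∈ ℝ², then all c_m and all d_m are zero. -/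
/-! Setting `x₁ = 1`, `x₂ = t` turns the identity into `A (1 + t²) + t · B (1 + t²) = 0`, where `A`
and `B` are the one-variable polynomials with coefficients `c` and `d`. Comparing `t` with `-t`
shows that `A` and `B` vanish at every `s = 1 + t² > 1`, and a polynomial with infinitely many
roots is zero. -/

open Finset

theorem coeff_eq_zero_of_sum_pow_eq_zero {R : Type*} [CommRing R] [IsDomain R] {S : Set R}
    (hS : S.Infinite) (n : ℕ) (c : ℕ → R) (h : ∀ s ∈ S, ∑ m ∈ range n, c m * s ^ m = 0) :
    ∀ m < n, c m = 0 := by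
  set P : Polynomial R := ∑ m ∈ range n, Polynomial.C (c m) * Polynomial.X ^ m with hP
  have hP0 : P = 0 := by
    refine Polynomial.eq_zero_of_infinite_isRoot P (hS.mono fun s hs => ?_)
    simpa [P, Polynomial.eval_finsetSum] using h s hs
  intro m hm
  simpa [P, Polynomial.finsetSum_coeff, Polynomial.coeff_C_mul, Polynomial.coeff_X_pow, hm]
    using congrArg (Polynomial.coeff · m) hP0

theorem eq_zero_of_add_mul_eq_zero_of_even {K : Type*} [Field K] [NeZero (2 : K)] {f g : K → K}
    (hf : ∀ t, f (-t) = f t) (hg : ∀ t, g (-t) = g t) (h : ∀ t, f t + t * g t = 0) {t : K}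
    (ht : t ≠ 0) : f t = 0 ∧ g t = 0 := by
  have hneg : f t - t * g t = 0 := by simpa [hf, hg, sub_eq_add_neg] using h (-t)
  have hf0 : f t = 0 := by
    have : (2 : K) * f t = 0 := by linear_combination h t + hneg
    exact (mul_eq_zero.mp this).resolve_left two_ne_zero
  refine ⟨hf0, ?_⟩
  have : t * g t = 0 := by linear_combination h t - hf0
  exact (mul_eq_zero.mp this).resolve_left ht

theorem stmt_6_general (p r : ℕ) (c d : ℕ → ℝ)
    (h : ∀ x₁ x₂ : ℝ,
      (∑ m ∈ Finset.range ((p - r) / 2 + 1),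
          c m * (x₁ ^ 2 + x₂ ^ 2) ^ m * x₁ ^ (p - r - 2 * m)) +
      (∑ m ∈ Finset.range ((p - r + 1) / 2),
          d m * (x₁ ^ 2 + x₂ ^ 2) ^ m * x₂ * x₁ ^ (p - r - 2 * m - 1)) = 0) :
    (∀ m ≤ (p - r) / 2, c m = 0) ∧ (∀ m, 2 * m + 1 ≤ p - r → d m = 0) := by
  set A : ℝ → ℝ := fun s => ∑ m ∈ range ((p - r) / 2 + 1), c m * s ^ m
  set B : ℝ → ℝ := fun s => ∑ m ∈ range ((p - r + 1) / 2), d m * s ^ m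
  have h_one : ∀ t : ℝ, A (1 + t ^ 2) + t * B (1 + t ^ 2) = 0 := by
    intro t
    rw [← h 1 t, mul_sum]
    simp only [A, one_pow, mul_one]
    congr 1
    exact sum_congr rfl fun m _ => by ring
  have hAB : ∀ s ∈ Set.Ioi (1 : ℝ), A s = 0 ∧ B s = 0 := by
    intro s (hs : 1 < s)
    have hsqrt : 1 + √(s - 1) ^ 2 = s := by
      rw [Real.sq_sqrt (by linarith)]; ring
    rw [← hsqrt]
    exact eq_zero_of_add_mul_eq_zero_of_even (f := fun t => A (1 + t ^ 2))
      (g := fun t => B (1 + t ^ 2)) (by simp) (by simp) h_one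
      (Real.sqrt_pos.mpr (by linarith)).ne'
  exact ⟨fun m hm => coeff_eq_zero_of_sum_pow_eq_zero (Set.Ioi_infinite 1) _ c
      (fun s hs => (hAB s hs).1) m (by omega),
    fun m hm => coeff_eq_zero_of_sum_pow_eq_zero (Set.Ioi_infinite 1) _ d
      (fun s hs => (hAB s hs).2) m (by omega)⟩

theorem stmt_6 (p r : ℕ) (hr : r ≤ p) (c d : ℕ → ℝ)
    (h : ∀ x₁ x₂ : ℝ,
      (∑ m ∈ Finset.range ((p - r) / 2 + 1),
          c m * (x₁ ^ 2 + x₂ ^ 2) ^ m * x₁ ^ (p - r - 2 * m)) +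
      (∑ m ∈ Finset.range ((p - r + 1) / 2),
          d m * (x₁ ^ 2 + x₂ ^ 2) ^ m * x₂ * x₁ ^ (p - r - 2 * m - 1)) = 0) :
    (∀ m ≤ (p - r) / 2, c m = 0) ∧ (∀ m, 2 * m + 1 ≤ p - r → d m = 0) :=
  stmt_6_general p r c d h
end

section
/- Let n = 2 and p, r ∈ ℕ. Suppose that for every unit vector u ∈ S¹, with ū its +π/2 rotation, one has Σ_{m,s: 2m+s=p−r} a_{ms} Q^m u^s + Σ_{m,s: 2m+s+1=p−r} b_{ms} Q^m ū u^s = 0 in the space of symmetric (p−r)-tensors on ℝ², where Q is the metric tensor. Then all coefficients a_{ms} and b_{ms} vanish. -/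
/-!
Restricting to `u = (1, 0)` and unit vectors `x = (t, e)` kills the powers of `Q` and turns the
identity into `F(t) + e G(t) = 0`, where `F` and `G` are the one-variable polynomials carrying the
`a`- and `b`-coefficients at pairwise distinct exponents. Both `e = ±√(1 - t²)` are allowed, so
`F` and `G` vanish on `(-1, 1)`, hence identically.
-/

open scoped RealInnerProductSpace
open Finset

/-- The rotation of `u` by `+π/2` in ℝ². -/
noncomputable def ubar (u : EuclideanSpace ℝ (Fin 2)) : EuclideanSpace ℝ (Fin 2) :=
  WithLp.toLp 2 ![-(u 1), u 0]

theorem EuclideanSpace.norm_vec_two (t e : ℝ) : ‖!₂[t, e]‖ = √(t ^ 2 + e ^ 2) := by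
  simp [EuclideanSpace.norm_eq, Fin.sum_univ_two]

theorem EuclideanSpace.inner_vec_two (a b c d : ℝ) : ⟪!₂[a, b], !₂[c, d]⟫ = a * c + b * d := by
  simp [PiLp.inner_apply, Fin.sum_univ_two]; ring

theorem ubar_vec_two (a b : ℝ) : ubar !₂[a, b] = !₂[-b, a] := rfl

theorem Polynomial.eq_zero_of_sum_mul_pow_eq_zero {R ι : Type*} [CommRing R] [IsDomain R]
    {s : Finset ι} {c : ι → R} {f : ι → ℕ} (hf : Set.InjOn f s) {S : Set R} (hS : S.Infinite)
    (h : ∀ t ∈ S, ∑ i ∈ s, c i * t ^ f i = 0) : ∀ i ∈ s, c i = 0 := by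
  set P : Polynomial R := ∑ i ∈ s, C (c i) * X ^ f i
  have hP : P = 0 := eq_zero_of_infinite_isRoot P <| hS.mono fun t ht => by
    simpa [P, eval_finsetSum] using h t ht
  intro i hi
  have hcoeff : P.coeff (f i) = c i := by
    rw [finsetSum_coeff, Finset.sum_eq_single i]
    · simp
    · intro j hj hji
      rw [coeff_C_mul_X_pow, if_neg fun h => hji (hf hj hi h.symm)]
    · exact fun h => absurd hi h
  simpa [hP] using hcoeff.symm

theorem sum_add_mul_sum_eq_zero_of_sq_add_sq_eq_one (d : ℕ) (a b : ℕ → ℕ → ℝ)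
    (h : ∀ u : EuclideanSpace ℝ (Fin 2), ‖u‖ = 1 →
      ∀ x : EuclideanSpace ℝ (Fin 2),
        (∑ m ∈ Finset.range (d / 2 + 1),
            a m (d - 2 * m) * ‖x‖ ^ (2 * m) * ⟪u, x⟫ ^ (d - 2 * m)) +
        (∑ m ∈ Finset.range ((d + 1) / 2),
            b m (d - 2 * m - 1) * ‖x‖ ^ (2 * m) * ⟪ubar u, x⟫ *
              ⟪u, x⟫ ^ (d - 2 * m - 1)) = 0)
    {t e : ℝ} (hte : t ^ 2 + e ^ 2 = 1) :
    ∑ m ∈ range (d / 2 + 1), a m (d - 2 * m) * t ^ (d - 2 * m) +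
      e * ∑ m ∈ range ((d + 1) / 2), b m (d - 2 * m - 1) * t ^ (d - 2 * m - 1) = 0 := by
  have := h !₂[1, 0] (by simp [EuclideanSpace.norm_vec_two]) !₂[t, e]
  simp only [EuclideanSpace.norm_vec_two, hte, Real.sqrt_one, one_pow, mul_one,
    EuclideanSpace.inner_vec_two, ubar_vec_two] at this
  simpa [mul_sum, mul_comm, mul_left_comm, mul_assoc] using this

theorem eq_zero_and_eq_zero_of_forall_sq_add_sq_eq_one {F G t : ℝ} (ht : t ∈ Set.Ioo (-1) 1)
    (h : ∀ e : ℝ, t ^ 2 + e ^ 2 = 1 → F + e * G = 0) : F = 0 ∧ G = 0 := by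
  obtain ⟨ht₁, ht₂⟩ := ht
  have he : √(1 - t ^ 2) ^ 2 = 1 - t ^ 2 := Real.sq_sqrt (by nlinarith)
  have hpos : 0 < √(1 - t ^ 2) := Real.sqrt_pos.2 (by nlinarith)
  have hplus := h (√(1 - t ^ 2)) (by linarith)
  have hminus := h (-√(1 - t ^ 2)) (by rw [neg_sq]; linarith)
  refine ⟨by linarith, (mul_eq_zero.1 (?_ : √(1 - t ^ 2) * G = 0)).resolve_left hpos.ne'⟩
  linarith

theorem stmt_14_general (p r : ℕ) (a b : ℕ → ℕ → ℝ)
    (h : ∀ u : EuclideanSpace ℝ (Fin 2), ‖u‖ = 1 →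
      ∀ x : EuclideanSpace ℝ (Fin 2),
        (∑ m ∈ Finset.range ((p - r) / 2 + 1),
            a m (p - r - 2 * m) * ‖x‖ ^ (2 * m) * ⟪u, x⟫ ^ (p - r - 2 * m)) +
        (∑ m ∈ Finset.range ((p - r + 1) / 2),
            b m (p - r - 2 * m - 1) * ‖x‖ ^ (2 * m) * ⟪ubar u, x⟫ *
              ⟪u, x⟫ ^ (p - r - 2 * m - 1)) = 0) :
    (∀ m s, 2 * m + s = p - r → a m s = 0) ∧
    (∀ m s, 2 * m + s + 1 = p - r → b m s = 0) := by
  set d := p - r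
  have hS : (Set.Ioo (-1 : ℝ) 1).Infinite := Set.Ioo_infinite (by norm_num)
  have hsums : ∀ t ∈ Set.Ioo (-1 : ℝ) 1,
      ∑ m ∈ range (d / 2 + 1), a m (d - 2 * m) * t ^ (d - 2 * m) = 0 ∧
      ∑ m ∈ range ((d + 1) / 2), b m (d - 2 * m - 1) * t ^ (d - 2 * m - 1) = 0 :=
    fun t ht => eq_zero_and_eq_zero_of_forall_sq_add_sq_eq_one ht fun _ hte =>
      sum_add_mul_sum_eq_zero_of_sq_add_sq_eq_one d a b h hte
  constructor
  · intro m s hms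
    obtain rfl : s = d - 2 * m := by omega
    refine Polynomial.eq_zero_of_sum_mul_pow_eq_zero (f := fun m => d - 2 * m) ?_ hS
      (fun t ht => (hsums t ht).1) m (mem_range.2 (by omega))
    intro i hi j hj hij
    simp only [coe_range, Set.mem_Iio] at hi hj hij
    omega
  · intro m s hms
    obtain rfl : s = d - 2 * m - 1 := by omega
    refine Polynomial.eq_zero_of_sum_mul_pow_eq_zero (f := fun m => d - 2 * m - 1) ?_ hS
      (fun t ht => (hsums t ht).2) m (mem_range.2 (by omega))
    intro i hi j hj hij
    simp only [coe_range, Set.mem_Iio] at hi hj hij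
    omega

/-- In ℝ², if for every unit vector `u`
`Σ_{2m+s=p−r} a_{ms} Q^m u^s + Σ_{2m+s+1=p−r} b_{ms} Q^m ū u^s = 0` as symmetric
`(p−r)`-tensors (expressed as polynomials in `x`; `Q` evaluates to `‖x‖²`), then all the
coefficients `a_{ms}`, `b_{ms}` vanish. -/
theorem stmt_14 (p r : ℕ) (hr : r ≤ p) (a b : ℕ → ℕ → ℝ)
    (h : ∀ u : EuclideanSpace ℝ (Fin 2), ‖u‖ = 1 →
      ∀ x : EuclideanSpace ℝ (Fin 2),
        (∑ m ∈ Finset.range ((p - r) / 2 + 1),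
            a m (p - r - 2 * m) * ‖x‖ ^ (2 * m) * ⟪u, x⟫ ^ (p - r - 2 * m)) +
        (∑ m ∈ Finset.range ((p - r + 1) / 2),
            b m (p - r - 2 * m - 1) * ‖x‖ ^ (2 * m) * ⟪ubar u, x⟫ *
              ⟪u, x⟫ ^ (p - r - 2 * m - 1)) = 0) :
    (∀ m s, 2 * m + s = p - r → a m s = 0) ∧
    (∀ m s, 2 * m + s + 1 = p - r → b m s = 0) :=
  stmt_14_general p r a b h
end
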